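/- The pairwise diversity function d has sensitivity at most 1: for every clustering function f : T → C, labels c, c' ∈ C, attributes A_c, A_{c'}, dataset D and tuple t, writing D' = D + {t}, one has |d(D', f, c, c', A_c, A_{c'}) − d(D, f, c, c', A_c, A_{c'})| ≤ 1. -/
import Mathlib


noncomputable section

/-- The cluster of label `c`: the sub-multiset of tuples of `D` mapped to `c` by `f`. -/
def cl {T C : Type*} [DecidableEq C] (D : Multiset T) (f : T → C) (c : C) : Multiset T :=
  D.filter (fun t => f t = c)

/-- The pairwise diversity `d(D, f, c, c', A_c, A_{c'}) = min{|D_c|, |D_{c'}|} · w`,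
where `w = 1` if `A_c ≠ A_{c'}`, and otherwise (with `A = A_c = A_{c'}`)
`w = (1/2) Σ_{a∈V} | cnt_{A=a}(D_c)/max{|D_c|,1} − cnt_{A=a}(D_{c'})/max{|D_{c'}|,1} |`. -/
def pdiv {T V C : Type*} [Fintype V] [DecidableEq V] [DecidableEq C]
    (D : Multiset T) (f : T → C) (c c' : C) (Ac Ac' : T → V) : ℝ :=
  (min (Multiset.card (cl D f c)) (Multiset.card (cl D f c')) : ℝ) *
    @ite ℝ (Ac = Ac') (Classical.propDecidable _)
      ((1 / 2) * ∑ a : V,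
        |(((cl D f c).map Ac).count a : ℝ) / (max (Multiset.card (cl D f c)) 1 : ℝ) -
          (((cl D f c').map Ac).count a : ℝ) / (max (Multiset.card (cl D f c')) 1 : ℝ)|)
      1

lemma cl_cons {T C : Type*} [DecidableEq C] (D : Multiset T) (f : T → C) (c : C) (t : T) :
    cl (t ::ₘ D) f c = if f t = c then t ::ₘ cl D f c else cl D f c := by
  simp only [cl, Multiset.filter_cons]
  by_cases h : f t = c <;> simp [h]

lemma sum_count_real {V : Type*} [Fintype V] [DecidableEq V] (S : Multiset V) :
    ∑ a : V, (S.count a : ℝ) = (Multiset.card S : ℝ) := by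
  induction S using Multiset.induction_on with
  | empty => simp
  | cons b S ih =>
    simp only [Multiset.count_cons, Multiset.card_cons]
    push_cast
    rw [Finset.sum_add_distrib, ih]
    simp

lemma abs_sum_sub_sum_le {V : Type*} [Fintype V] (f g b : V → ℝ)
    (h : ∀ a, |f a - g a| ≤ b a) :
    |∑ a : V, f a - ∑ a : V, g a| ≤ ∑ a : V, b a := by
  rw [← Finset.sum_sub_distrib]
  exact le_trans (Finset.abs_sum_le_sum_abs _ _) (Finset.sum_le_sum fun a _ => h a)

/-- Key real-valued sensitivity lemma: adding one unit of mass (`e`) to the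
first histogram changes `min · TV` by at most 1. -/
lemma key {V : Type*} [Fintype V] (n m : ℕ) (u v e : V → ℝ)
    (hu : ∀ a, 0 ≤ u a) (hv : ∀ a, 0 ≤ v a) (he : ∀ a, 0 ≤ e a)
    (hun : ∑ a : V, u a = n) (hvm : ∑ a : V, v a = m) (hes : ∑ a : V, e a = 1) :
    |min ((n : ℝ) + 1) (m : ℝ) *
        ((1 / 2) * ∑ a : V, |(u a + e a) / max ((n : ℝ) + 1) 1 - v a / max (m : ℝ) 1|) -
      min (n : ℝ) (m : ℝ) *
        ((1 / 2) * ∑ a : V, |u a / max (n : ℝ) 1 - v a / max (m : ℝ) 1|)| ≤ 1 := by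
  have hmax1 : max ((n : ℝ) + 1) 1 = (n : ℝ) + 1 := by
    apply max_eq_left; linarith [(Nat.cast_nonneg n : (0:ℝ) ≤ (n:ℝ))]
  have hM0 : (0 : ℝ) < max (m : ℝ) 1 := lt_of_lt_of_le one_pos (le_max_right _ _)
  set M : ℝ := max (m : ℝ) 1 with hM
  have hqsum : ∑ a : V, v a / M = (m : ℝ) / M := by
    rw [← Finset.sum_div, hvm]
  have hqle : (m : ℝ) / M ≤ 1 := by
    rw [div_le_one hM0]; exact le_max_left _ _
  have hq0 : ∀ a, 0 ≤ v a / M := fun a => div_nonneg (hv a) hM0.le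
  rcases le_or_gt m n with hmn | hnm
  · -- m ≤ n : both mins are m
    have hmn' : (m : ℝ) ≤ (n : ℝ) := Nat.cast_le.mpr hmn
    have h1 : min ((n : ℝ) + 1) (m : ℝ) = (m : ℝ) := by
      apply min_eq_right; linarith
    have h2 : min (n : ℝ) (m : ℝ) = (m : ℝ) := min_eq_right (by exact_mod_cast hmn)
    rw [h1, h2, hmax1]
    rcases Nat.eq_zero_or_pos n with h0 | hn
    · have hm0 : m = 0 := by omega
      subst h0; subst hm0
      simp
    · have hmaxn : max (n : ℝ) 1 = (n : ℝ) := by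
        apply max_eq_left; exact_mod_cast hn
      rw [hmaxn]
      have hn0 : (0 : ℝ) < n := by exact_mod_cast hn
      have hn1 : (0 : ℝ) < (n : ℝ) + 1 := by linarith
      have hS : |(∑ a : V, |(u a + e a) / ((n : ℝ) + 1) - v a / M|) -
          (∑ a : V, |u a / (n : ℝ) - v a / M|)| ≤ 2 / ((n : ℝ) + 1) := by
        have := abs_sum_sub_sum_le (fun a => |(u a + e a) / ((n : ℝ) + 1) - v a / M|)
          (fun a => |u a / (n : ℝ) - v a / M|)
          (fun a => e a / ((n : ℝ) + 1) + u a / ((n : ℝ) * ((n : ℝ) + 1)))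
          (fun a => by
            refine le_trans (abs_abs_sub_abs_le_abs_sub _ _) ?_
            have heq : ((u a + e a) / ((n : ℝ) + 1) - v a / M) - (u a / (n : ℝ) - v a / M)
                = e a / ((n : ℝ) + 1) - u a / ((n : ℝ) * ((n : ℝ) + 1)) := by
              field_simp; ring
            rw [heq]
            refine le_trans (abs_sub _ _) ?_
            rw [abs_of_nonneg (div_nonneg (he a) hn1.le),
              abs_of_nonneg (div_nonneg (hu a) (mul_pos hn0 hn1).le)])
        refine le_trans this ?_
        rw [Finset.sum_add_distrib, ← Finset.sum_div, ← Finset.sum_div, hes, hun]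
        have hcomb : 1 / ((n : ℝ) + 1) + (n : ℝ) / ((n : ℝ) * ((n : ℝ) + 1))
            = 2 / ((n : ℝ) + 1) := by
          field_simp
          ring
        rw [hcomb]
      have : |(m : ℝ) * ((1 / 2) * ∑ a : V, |(u a + e a) / ((n : ℝ) + 1) - v a / M|) -
          (m : ℝ) * ((1 / 2) * ∑ a : V, |u a / (n : ℝ) - v a / M|)|
          = (m : ℝ) * (1 / 2) * |(∑ a : V, |(u a + e a) / ((n : ℝ) + 1) - v a / M|) -
            (∑ a : V, |u a / (n : ℝ) - v a / M|)| := by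
        rw [← mul_sub, ← mul_sub, abs_mul, abs_mul, abs_of_nonneg (by positivity : (0:ℝ) ≤ (m:ℝ)),
          abs_of_nonneg (by norm_num : (0:ℝ) ≤ (1/2 : ℝ))]
        ring
      rw [this]
      calc (m : ℝ) * (1 / 2) * |(∑ a : V, |(u a + e a) / ((n : ℝ) + 1) - v a / M|) -
            (∑ a : V, |u a / (n : ℝ) - v a / M|)|
          ≤ (m : ℝ) * (1 / 2) * (2 / ((n : ℝ) + 1)) := by
            apply mul_le_mul_of_nonneg_left hS (by positivity)
        _ = (m : ℝ) / ((n : ℝ) + 1) := by ring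
        _ ≤ 1 := by rw [div_le_one hn1]; linarith
  · -- n < m : mins are n+1 and n, and m ≥ 1 so M = m and m/M = 1
    have hm1 : 1 ≤ m := by omega
    have hMm : M = (m : ℝ) := by
      rw [hM]; apply max_eq_left; exact_mod_cast hm1
    have hqsum1 : ∑ a : V, v a / M = 1 := by
      rw [hqsum, hMm, div_self (by exact_mod_cast Nat.pos_of_ne_zero (by omega) : (0:ℝ) < (m:ℝ)).ne']
    have hnm' : (n : ℝ) < (m : ℝ) := by exact_mod_cast hnm
    have h1 : min ((n : ℝ) + 1) (m : ℝ) = (n : ℝ) + 1 := by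
      apply min_eq_left; exact_mod_cast hnm
    have h2 : min (n : ℝ) (m : ℝ) = (n : ℝ) := min_eq_left (le_of_lt hnm')
    rw [h1, h2, hmax1]
    rcases Nat.eq_zero_or_pos n with h0 | hn
    · subst h0
      simp only [Nat.cast_zero, zero_add, div_one, zero_mul, sub_zero, one_mul]
      rw [abs_of_nonneg (by positivity)]
      have hb : ∑ a : V, |u a + e a - v a / M| ≤ 2 := by
        calc ∑ a : V, |u a + e a - v a / M|
            ≤ ∑ a : V, ((u a + e a) + v a / M) := by
              apply Finset.sum_le_sum
              intro a _
              refine le_trans (abs_sub _ _) ?_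
              rw [abs_of_nonneg (by have := hu a; have := he a; linarith),
                abs_of_nonneg (hq0 a)]
          _ = 2 := by
              rw [Finset.sum_add_distrib, Finset.sum_add_distrib, hun, hes, hqsum1]
              norm_num
      linarith
    · have hmaxn : max (n : ℝ) 1 = (n : ℝ) := by
        apply max_eq_left; exact_mod_cast hn
      rw [hmaxn]
      have hn0 : (0 : ℝ) < n := by exact_mod_cast hn
      have hn1 : (0 : ℝ) < (n : ℝ) + 1 := by linarith
      -- rewrite k * (1/2 * Σ|x|) as 1/2 * Σ|k x|
      have hA : ((n : ℝ) + 1) * ((1 / 2) * ∑ a : V, |(u a + e a) / ((n : ℝ) + 1) - v a / M|)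
          = (1 / 2) * ∑ a : V, |(u a + e a) - ((n : ℝ) + 1) * (v a / M)| := by
        rw [mul_left_comm, Finset.mul_sum]
        congr 1
        apply Finset.sum_congr rfl
        intro a _
        calc ((n : ℝ) + 1) * |(u a + e a) / ((n : ℝ) + 1) - v a / M|
            = |((n : ℝ) + 1)| * |(u a + e a) / ((n : ℝ) + 1) - v a / M| := by
              rw [abs_of_pos hn1]
          _ = |((n : ℝ) + 1) * ((u a + e a) / ((n : ℝ) + 1) - v a / M)| := (abs_mul _ _).symm
          _ = |(u a + e a) - ((n : ℝ) + 1) * (v a / M)| := by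
              rw [mul_sub, mul_div_cancel₀ _ hn1.ne']
      have hB : (n : ℝ) * ((1 / 2) * ∑ a : V, |u a / (n : ℝ) - v a / M|)
          = (1 / 2) * ∑ a : V, |u a - (n : ℝ) * (v a / M)| := by
        rw [mul_left_comm, Finset.mul_sum]
        congr 1
        apply Finset.sum_congr rfl
        intro a _
        calc (n : ℝ) * |u a / (n : ℝ) - v a / M|
            = |(n : ℝ)| * |u a / (n : ℝ) - v a / M| := by rw [abs_of_pos hn0]
          _ = |(n : ℝ) * (u a / (n : ℝ) - v a / M)| := (abs_mul _ _).symm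
          _ = |u a - (n : ℝ) * (v a / M)| := by
              rw [mul_sub, mul_div_cancel₀ _ hn0.ne']
      rw [hA, hB, ← mul_sub, abs_mul, abs_of_nonneg (by norm_num : (0:ℝ) ≤ (1/2:ℝ))]
      have hS : |(∑ a : V, |(u a + e a) - ((n : ℝ) + 1) * (v a / M)|) -
          (∑ a : V, |u a - (n : ℝ) * (v a / M)|)| ≤ 2 := by
        have := abs_sum_sub_sum_le (fun a => |(u a + e a) - ((n : ℝ) + 1) * (v a / M)|)
          (fun a => |u a - (n : ℝ) * (v a / M)|)
          (fun a => e a + v a / M)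
          (fun a => by
            refine le_trans (abs_abs_sub_abs_le_abs_sub _ _) ?_
            have heq : ((u a + e a) - ((n : ℝ) + 1) * (v a / M)) - (u a - (n : ℝ) * (v a / M))
                = e a - v a / M := by ring
            rw [heq]
            refine le_trans (abs_sub _ _) ?_
            rw [abs_of_nonneg (he a), abs_of_nonneg (hq0 a)])
        refine le_trans this ?_
        rw [Finset.sum_add_distrib, hes, hqsum1]
        norm_num
      nlinarith [hS]


/-- Symmetric version of `key`: the unit of mass is added to the second histogram. -/
lemma key' {V : Type*} [Fintype V] (n m : ℕ) (u v e : V → ℝ)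
    (hu : ∀ a, 0 ≤ u a) (hv : ∀ a, 0 ≤ v a) (he : ∀ a, 0 ≤ e a)
    (hun : ∑ a : V, u a = n) (hvm : ∑ a : V, v a = m) (hes : ∑ a : V, e a = 1) :
    |min (n : ℝ) ((m : ℝ) + 1) *
        ((1 / 2) * ∑ a : V, |u a / max (n : ℝ) 1 - (v a + e a) / max ((m : ℝ) + 1) 1|) -
      min (n : ℝ) (m : ℝ) *
        ((1 / 2) * ∑ a : V, |u a / max (n : ℝ) 1 - v a / max (m : ℝ) 1|)| ≤ 1 := by
  have hk := key m n v u e hv hu he hvm hun hes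
  rw [min_comm ((m : ℝ) + 1) (n : ℝ), min_comm (m : ℝ) (n : ℝ)] at hk
  have hs1 : ∑ a : V, |(v a + e a) / max ((m : ℝ) + 1) 1 - u a / max (n : ℝ) 1|
      = ∑ a : V, |u a / max (n : ℝ) 1 - (v a + e a) / max ((m : ℝ) + 1) 1| :=
    Finset.sum_congr rfl fun a _ => abs_sub_comm _ _
  have hs2 : ∑ a : V, |v a / max (m : ℝ) 1 - u a / max (n : ℝ) 1|
      = ∑ a : V, |u a / max (n : ℝ) 1 - v a / max (m : ℝ) 1| :=
    Finset.sum_congr rfl fun a _ => abs_sub_comm _ _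
  rw [hs1, hs2] at hk
  exact hk

lemma abs_min_sub_min (a b c d : ℝ) (h1 : a ≤ c) (h2 : c ≤ a + 1) (h3 : b ≤ d)
    (h4 : d ≤ b + 1) : |min c d - min a b| ≤ 1 := by
  have k1 : min c d ≤ min (a + 1) (b + 1) := min_le_min h2 h4
  have k2 : min (a + 1) (b + 1) = min a b + 1 := min_add_add_right a b 1
  have k3 : min a b ≤ min c d := min_le_min h1 h3
  rw [abs_le]; constructor <;> linarith

lemma sum_count_eq_card {T V : Type*} [Fintype V] [DecidableEq V]
    (X : Multiset T) (A : T → V) :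
    ∑ a : V, (((X.map A).count a : ℕ) : ℝ) = ((Multiset.card X : ℕ) : ℝ) := by
  rw [sum_count_real]
  simp

/-- The pairwise diversity function `d` has sensitivity at most `1`. -/
theorem pdiv_sensitivity {T V C : Type*} [Fintype V] [DecidableEq V] [DecidableEq C]
    (f : T → C) (c c' : C) (Ac Ac' : T → V) :
    ∀ (D : Multiset T) (t : T),
      |pdiv (t ::ₘ D) f c c' Ac Ac' - pdiv D f c c' Ac Ac'| ≤ 1 := by
  intro D t
  by_cases hA : Ac = Ac'
  · subst hA
    by_cases hcc : c = c'
    · subst hcc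
      simp [pdiv, sub_self]
    · simp only [pdiv, if_pos rfl]
      by_cases h1 : f t = c
      · have h2 : f t ≠ c' := by rw [h1]; exact hcc
        rw [cl_cons D f c t, if_pos h1, cl_cons D f c' t, if_neg h2]
        have hk := key (Multiset.card (cl D f c)) (Multiset.card (cl D f c'))
          (fun a => (((cl D f c).map Ac).count a : ℝ))
          (fun a => (((cl D f c').map Ac).count a : ℝ))
          (fun a => ((if a = Ac t then 1 else 0 : ℕ) : ℝ))
          (fun a => by positivity) (fun a => by positivity)
          (fun a => by positivity)
          (sum_count_eq_card _ _) (sum_count_eq_card _ _)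
          (by push_cast; simp)
        simp only [Multiset.card_cons, Multiset.map_cons, Multiset.count_cons] at *
        push_cast at hk ⊢
        convert hk using 4
      · by_cases h2 : f t = c'
        · rw [cl_cons D f c t, if_neg h1, cl_cons D f c' t, if_pos h2]
          have hk := key' (Multiset.card (cl D f c)) (Multiset.card (cl D f c'))
            (fun a => (((cl D f c).map Ac).count a : ℝ))
            (fun a => (((cl D f c').map Ac).count a : ℝ))
            (fun a => ((if a = Ac t then 1 else 0 : ℕ) : ℝ))
            (fun a => by positivity) (fun a => by positivity)
            (fun a => by positivity)
            (sum_count_eq_card _ _) (sum_count_eq_card _ _)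
            (by push_cast; simp)
          simp only [Multiset.card_cons, Multiset.map_cons, Multiset.count_cons] at *
          push_cast at hk ⊢
          convert hk using 4
        · rw [cl_cons D f c t, if_neg h1, cl_cons D f c' t, if_neg h2]
          simp
  · simp only [pdiv, if_neg hA, mul_one]
    rw [cl_cons D f c t, cl_cons D f c' t]
    by_cases h1 : f t = c <;> by_cases h2 : f t = c'
    · rw [if_pos h1, if_pos h2]
      simp only [Multiset.card_cons]
      push_cast
      apply abs_min_sub_min <;> linarith
    · rw [if_pos h1, if_neg h2]
      simp only [Multiset.card_cons]
      push_cast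
      apply abs_min_sub_min <;> linarith
    · rw [if_neg h1, if_pos h2]
      simp only [Multiset.card_cons]
      push_cast
      apply abs_min_sub_min <;> linarith
    · rw [if_neg h1, if_neg h2]
      simp
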